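/- Let q : ℕ → ℝ be a sequence of nonnegative reals with q₁ = h ∈ [0,a] (a the real root of a^3+2a^2+3a-2 = 0) satisfying q_k ≤ N_{k-1} q_{k-1}^2 for k ≥ 2, where N_j = 1 + (1+q_j)^2/2. Then for every k ≥ 1, N_k q_k ≤ 1, and both sequences (q_k) and (N_k) are nonincreasing. -/

import Mathlib

/-!
Write `N x = 1 + (1 + x)^2 / 2`. The map `x ↦ N x * x` is increasing on `[0, ∞)` and takes the
value `(a^3 + 2a^2 + 3a) / 2 = 1` at `a`, so `N x * x ≤ 1` on `[0, a]`. On that interval the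
recursion gives `q_{k+1} ≤ (N q_k * q_k) * q_k ≤ q_k`, so by induction every `q_k` stays in
`[0, a]` and the sequence decreases; `N` is increasing, so `N q_k` decreases as well.
-/

noncomputable def N (x : ℝ) : ℝ := 1 + (1 + x) ^ 2 / 2

lemma N_le_N {x y : ℝ} (hx : 0 ≤ x) (hxy : x ≤ y) : N x ≤ N y := by
  unfold N; gcongr

lemma N_mul_self_le {x y : ℝ} (hx : 0 ≤ x) (hxy : x ≤ y) : N x * x ≤ N y * y :=
  mul_le_mul (N_le_N hx hxy) hxy hx (by unfold N; positivity)

lemma N_mul_self_eq_one {a : ℝ} (ha : a ^ 3 + 2 * a ^ 2 + 3 * a - 2 = 0) : N a * a = 1 := by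
  unfold N; linear_combination ha / 2

lemma N_mul_self_le_one {a x : ℝ} (ha : a ^ 3 + 2 * a ^ 2 + 3 * a - 2 = 0)
    (hx : 0 ≤ x) (hxa : x ≤ a) : N x * x ≤ 1 :=
  N_mul_self_eq_one ha ▸ N_mul_self_le hx hxa

lemma le_of_le_N_mul_sq {x y : ℝ} (hx : 0 ≤ x) (hNx : N x * x ≤ 1) (hy : y ≤ N x * x ^ 2) :
    y ≤ x :=
  calc y ≤ (N x * x) * x := by linarith
    _ ≤ 1 * x := mul_le_mul_of_nonneg_right hNx hx
    _ = x := one_mul x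

theorem Nq_le_one_and_monotone_general (a : ℝ) (ha : a ^ 3 + 2 * a ^ 2 + 3 * a - 2 = 0)
    (h : ℝ) (hha : h ≤ a)
    (q : ℕ → ℝ) (hqpos : ∀ k, 0 ≤ q k) (hq1 : q 1 = h)
    (hrec : ∀ k, 2 ≤ k → q k ≤ (1 + (1 + q (k - 1)) ^ 2 / 2) * q (k - 1) ^ 2) :
    (∀ k, 1 ≤ k → (1 + (1 + q k) ^ 2 / 2) * q k ≤ 1) ∧
      (∀ k, 1 ≤ k → q (k + 1) ≤ q k) ∧
      (∀ k, 1 ≤ k → 1 + (1 + q (k + 1)) ^ 2 / 2 ≤ 1 + (1 + q k) ^ 2 / 2) := by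
  have hdecr : ∀ k, 1 ≤ k → q k ≤ a → q (k + 1) ≤ q k := fun k hk hka =>
    le_of_le_N_mul_sq (hqpos k) (N_mul_self_le_one ha (hqpos k) hka)
      (by simpa only [Nat.add_sub_cancel, N] using hrec (k + 1) (by omega))
  have hle : ∀ k, 1 ≤ k → q k ≤ a := by
    intro k hk
    induction k, hk using Nat.le_induction with
    | base => exact hq1 ▸ hha
    | succ k hk ih => exact (hdecr k hk ih).trans ih
  have hmono : ∀ k, 1 ≤ k → q (k + 1) ≤ q k := fun k hk => hdecr k hk (hle k hk)
  exact ⟨fun k hk => N_mul_self_le_one ha (hqpos k) (hle k hk), hmono,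
    fun k hk => N_le_N (hqpos (k + 1)) (hmono k hk)⟩

theorem Nq_le_one_and_monotone (a : ℝ) (ha : a ^ 3 + 2 * a ^ 2 + 3 * a - 2 = 0)
    (ha1 : (0.477 : ℝ) < a) (ha2 : a < 0.478)
    (h : ℝ) (hh0 : 0 ≤ h) (hha : h ≤ a)
    (q : ℕ → ℝ) (hqpos : ∀ k, 0 ≤ q k) (hq1 : q 1 = h)
    (hrec : ∀ k, 2 ≤ k → q k ≤ (1 + (1 + q (k - 1)) ^ 2 / 2) * q (k - 1) ^ 2) :
    (∀ k, 1 ≤ k → (1 + (1 + q k) ^ 2 / 2) * q k ≤ 1) ∧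
      (∀ k, 1 ≤ k → q (k + 1) ≤ q k) ∧
      (∀ k, 1 ≤ k → 1 + (1 + q (k + 1)) ^ 2 / 2 ≤ 1 + (1 + q k) ^ 2 / 2) :=
  Nq_le_one_and_monotone_general a ha h hha q hqpos hq1 hrec
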